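/- arXiv:2509.14695 — 9 statements merged into one kernel-verified Lean document; each statement's English description precedes it below -/
import Mathlib

section
/- Let (g, B) be a cyclic metric Lie algebra that is a direct sum of ideals g = g₁ ⊕ g₂ where g₁ is semisimple. Then B(g₁, g₂) = 0. -/
/-- If a cyclic metric Lie algebra (g, B) is a direct sum of ideals
g = g₁ ⊕ g₂ with g₁ semisimple, then B(g₁, g₂) = 0. -/
theorem cyclic_bilinear_semisimple_ideal_orthogonal
    {F L : Type*} [Field F] [LieRing L] [LieAlgebra F L]
    (B : L →ₗ[F] L →ₗ[F] F)
    (hsymm : ∀ x y : L, B x y = B y x)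
    (hcyc : ∀ x y z : L, B ⁅x, y⁆ z + B ⁅y, z⁆ x + B ⁅z, x⁆ y = 0)
    (g₁ g₂ : LieIdeal F L)
    (hdirect : IsCompl g₁.toSubmodule g₂.toSubmodule)
    [LieAlgebra.IsSemisimple F g₁] :
    ∀ x ∈ g₁, ∀ y ∈ g₂, B x y = 0 := by
  -- brackets between g₁ and g₂ vanish
  have hmix : ∀ a ∈ g₁, ∀ y ∈ g₂, ⁅a, y⁆ = 0 := by
    intro a ha y hy
    have h1 : ⁅a, y⁆ ∈ g₁.toSubmodule := lie_mem_left F L g₁ a y ha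
    have h2 : ⁅a, y⁆ ∈ g₂.toSubmodule := lie_mem_right F L g₂ a y hy
    have : ⁅a, y⁆ ∈ g₁.toSubmodule ⊓ g₂.toSubmodule := ⟨h1, h2⟩
    rwa [hdirect.inf_eq_bot, Submodule.mem_bot] at this
  -- g₁ is perfect
  have hperf : (⊤ : LieIdeal F g₁) ≤ ⁅(⊤ : LieIdeal F g₁), (⊤ : LieIdeal F g₁)⁆ := by
    conv_lhs => rw [← LieAlgebra.IsSemisimple.sSup_atoms_eq_top (R := F) (L := g₁)]
    apply sSup_le
    intro I hI
    have hne : ¬ IsLieAbelian I := LieAlgebra.IsSemisimple.non_abelian_of_isAtom I hI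
    have hII : ⁅I, I⁆ = I := by
      by_contra h
      have hlt : ⁅I, I⁆ < I := lt_of_le_of_ne (LieSubmodule.lie_le_right I I) h
      have : ⁅I, I⁆ = ⊥ := hI.2 _ hlt
      exact hne ((LieSubmodule.lie_abelian_iff_lie_self_eq_bot I).mpr this)
    calc I = ⁅I, I⁆ := hII.symm
      _ ≤ ⁅(⊤ : LieIdeal F g₁), (⊤ : LieIdeal F g₁)⁆ :=
        LieSubmodule.mono_lie le_top le_top
  intro x hx y hy
  -- the element ⟨x, hx⟩ of g₁ lies in the span of brackets
  have hmem : (⟨x, hx⟩ : g₁) ∈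
      Submodule.span F { m : g₁ | ∃ a ∈ (⊤ : LieIdeal F g₁), ∃ b ∈ (⊤ : LieIdeal F g₁),
        ⁅a, b⁆ = m } := by
    rw [← LieSubmodule.lieIdeal_oper_eq_linear_span']
    exact hperf (LieSubmodule.mem_top _)
  -- induct over the span
  have key : ∀ m : g₁, m ∈ Submodule.span F { m : g₁ | ∃ a ∈ (⊤ : LieIdeal F g₁),
      ∃ b ∈ (⊤ : LieIdeal F g₁), ⁅a, b⁆ = m } → B (m : L) y = 0 := by
    intro m hm
    refine Submodule.span_induction ?_ ?_ ?_ ?_ hm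
    · rintro _ ⟨a, -, b, -, rfl⟩
      have hc := hcyc (a : L) (b : L) y
      have h1 : ⁅(b : L), y⁆ = 0 := hmix b b.2 y hy
      have h2 : ⁅y, (a : L)⁆ = 0 := by
        rw [← lie_skew, hmix a a.2 y hy, neg_zero]
      rw [h1, h2] at hc
      simpa using hc
    · simp
    · intro u v _ _ hu hv
      simp [hu, hv]
    · intro t u _ hu
      simp [hu]
  exact key _ hmem
end

section
/- Let g = g₁ +_π g₂ be the semidirect product of Lie algebras g₁ and g₂ via a homomorphism π: g₁ → Der(g₂), equipped with cyclic metrics B₁ on g₁ and B₂ on g₂. The orthogonal sum metric ⟨(x₁,x₂),(y₁,y₂)⟩ = B₁(x₁,y₁) + B₂(x₂,y₂) is cyclic on g if and only if for each x ∈ g₁, the derivation π(x) is symmetric with respect to B₂. -/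
/-- The orthogonal sum metric on the semidirect product g₁ +_π g₂
(with bracket [(x₁,x₂),(y₁,y₂)] = ([x₁,y₁], [x₂,y₂] + π(x₁)y₂ − π(y₁)x₂))
is cyclic if and only if each derivation π(x) is symmetric with respect to B₂. -/
theorem semidirect_orthogonal_sum_cyclic_iff
    {F g₁ g₂ : Type*} [Field F]
    [LieRing g₁] [LieAlgebra F g₁] [LieRing g₂] [LieAlgebra F g₂]
    (π : g₁ →ₗ⁅F⁆ LieDerivation F g₂ g₂)
    (B₁ : g₁ →ₗ[F] g₁ →ₗ[F] F) (B₂ : g₂ →ₗ[F] g₂ →ₗ[F] F)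
    (hB₁symm : ∀ x y : g₁, B₁ x y = B₁ y x)
    (hB₁cyc : ∀ x y z : g₁, B₁ ⁅x, y⁆ z + B₁ ⁅y, z⁆ x + B₁ ⁅z, x⁆ y = 0)
    (hB₂symm : ∀ x y : g₂, B₂ x y = B₂ y x)
    (hB₂cyc : ∀ x y z : g₂, B₂ ⁅x, y⁆ z + B₂ ⁅y, z⁆ x + B₂ ⁅z, x⁆ y = 0) :
    (∀ a b c : g₁ × g₂,
        (B₁ ⁅a.1, b.1⁆ c.1 + B₂ (⁅a.2, b.2⁆ + π a.1 b.2 - π b.1 a.2) c.2) +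
        (B₁ ⁅b.1, c.1⁆ a.1 + B₂ (⁅b.2, c.2⁆ + π b.1 c.2 - π c.1 b.2) a.2) +
        (B₁ ⁅c.1, a.1⁆ b.1 + B₂ (⁅c.2, a.2⁆ + π c.1 a.2 - π a.1 c.2) b.2) = 0) ↔
    (∀ x : g₁, ∀ u v : g₂, B₂ (π x u) v = B₂ u (π x v)) := by
  constructor
  · intro h x u v
    have key := h (x, 0) (0, u) (0, v)
    simp only [lie_zero, zero_lie, map_zero, zero_add, add_zero, zero_sub, sub_zero,
      map_neg, LinearMap.neg_apply, LinearMap.zero_apply] at key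
    linear_combination key - hB₂symm u ((π x) v)
  · intro h a b c
    obtain ⟨x₁, x₂⟩ := a
    obtain ⟨y₁, y₂⟩ := b
    obtain ⟨z₁, z₂⟩ := c
    simp only [map_add, map_sub, LinearMap.add_apply, LinearMap.sub_apply]
    have e1 : B₂ (π x₁ y₂) z₂ = B₂ (π x₁ z₂) y₂ := by rw [h x₁ y₂ z₂, hB₂symm]
    have e2 : B₂ (π y₁ z₂) x₂ = B₂ (π y₁ x₂) z₂ := by rw [h y₁ z₂ x₂, hB₂symm]
    have e3 : B₂ (π z₁ x₂) y₂ = B₂ (π z₁ y₂) x₂ := by rw [h z₁ x₂ y₂, hB₂symm]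
    linear_combination hB₁cyc x₁ y₁ z₁ + hB₂cyc x₂ y₂ z₂ + e1 + e2 + e3
end

section
/- Let F be a field of characteristic not 2 or 3, and let g = sl(2,F) +_π F² be the semidirect product Lie algebra defined by the natural action of sl(2,F) on F². Then every cyclic metric B on g satisfies B(F², g) = 0. -/
open LieAlgebra.SpecialLinear

section Aux
variable (F : Type*) [Field F]

private def slH : sl (Fin 2) F := ⟨!![1,0;0,-1], by
  show _ ∈ LinearMap.ker (Matrix.traceLinearMap _ F F)
  rw [LinearMap.mem_ker]; simp [Matrix.trace_fin_two]⟩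

private def slE : sl (Fin 2) F := ⟨!![0,1;0,0], by
  show _ ∈ LinearMap.ker (Matrix.traceLinearMap _ F F)
  rw [LinearMap.mem_ker]; simp [Matrix.trace_fin_two]⟩

private def slF : sl (Fin 2) F := ⟨!![0,0;1,0], by
  show _ ∈ LinearMap.ker (Matrix.traceLinearMap _ F F)
  rw [LinearMap.mem_ker]; simp [Matrix.trace_fin_two]⟩

private lemma lie_HE : ⁅slH F, slE F⁆ = (2:F) • slE F := by
  apply Subtype.ext
  show (slH F).val * (slE F).val - (slE F).val * (slH F).val = (2:F) • (slE F).val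
  simp only [slH, slE]
  ext i j; fin_cases i <;> fin_cases j <;>
    simp [Matrix.mul_apply, Fin.sum_univ_two, Matrix.smul_apply] <;> ring

private lemma lie_HF : ⁅slH F, slF F⁆ = (-2:F) • slF F := by
  apply Subtype.ext
  show (slH F).val * (slF F).val - (slF F).val * (slH F).val = (-2:F) • (slF F).val
  simp only [slH, slF]
  ext i j; fin_cases i <;> fin_cases j <;>
    simp [Matrix.mul_apply, Fin.sum_univ_two, Matrix.smul_apply] <;> ring

private lemma lie_EF : ⁅slE F, slF F⁆ = slH F := by
  apply Subtype.ext
  show (slE F).val * (slF F).val - (slF F).val * (slE F).val = (slH F).val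
  simp only [slH, slE, slF]
  ext i j; fin_cases i <;> fin_cases j <;>
    simp [Matrix.mul_apply, Fin.sum_univ_two]

private lemma sl_decomp (y : sl (Fin 2) F) :
    y = (y.val 0 0) • slH F + (y.val 0 1) • slE F + (y.val 1 0) • slF F := by
  have htr : Matrix.trace y.val = 0 := y.2
  rw [Matrix.trace_fin_two] at htr
  apply Subtype.ext
  show y.val = (y.val 0 0) • (slH F).val + (y.val 0 1) • (slE F).val + (y.val 1 0) • (slF F).val
  simp only [slH, slE, slF]
  ext i j; fin_cases i <;> fin_cases j <;>
    simp [Matrix.smul_apply] <;> linear_combination htr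

end Aux

open LieAlgebra.SpecialLinear in
set_option maxHeartbeats 1600000 in
open LieAlgebra.SpecialLinear in
/-- Every cyclic metric B on the semidirect product g = sl(2,F) +_π F²
(natural action, F² an Abelian ideal) satisfies B(F², g) = 0.  The semidirect product
bracket is [(x,u),(y,v)] = ([x,y], x·v − y·u). -/
theorem cyclic_metric_sl2_semidirect_vanishes_on_radical
    {F : Type*} [Field F]
    (hchar2 : ringChar F ≠ 2) (hchar3 : ringChar F ≠ 3)
    (B : (sl (Fin 2) F × (Fin 2 → F)) →ₗ[F] (sl (Fin 2) F × (Fin 2 → F)) →ₗ[F] F)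
    (hsymm : ∀ a b : sl (Fin 2) F × (Fin 2 → F), B a b = B b a)
    (hcyc : ∀ a b c : sl (Fin 2) F × (Fin 2 → F),
      B (⁅a.1, b.1⁆, (a.1 : Matrix (Fin 2) (Fin 2) F).mulVec b.2
          - (b.1 : Matrix (Fin 2) (Fin 2) F).mulVec a.2) c +
      B (⁅b.1, c.1⁆, (b.1 : Matrix (Fin 2) (Fin 2) F).mulVec c.2
          - (c.1 : Matrix (Fin 2) (Fin 2) F).mulVec b.2) a +
      B (⁅c.1, a.1⁆, (c.1 : Matrix (Fin 2) (Fin 2) F).mulVec a.2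
          - (a.1 : Matrix (Fin 2) (Fin 2) F).mulVec c.2) b = 0) :
    ∀ (v : Fin 2 → F) (a : sl (Fin 2) F × (Fin 2 → F)), B (0, v) a = 0 := by
  have h2 : (2:F) ≠ 0 := Ring.two_ne_zero hchar2
  -- basic linearity helpers
  have hBzero : ∀ a, B ((0 : sl (Fin 2) F), (0 : Fin 2 → F)) a = 0 := by
    intro a
    have e : ((0,0) : sl (Fin 2) F × (Fin 2 → F)) = 0 := rfl
    rw [e, map_zero, LinearMap.zero_apply]
  have hBneg : ∀ (z : Fin 2 → F) a, B ((0 : sl (Fin 2) F), -z) a = - B (0, z) a := by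
    intro z a
    have e : ((0,-z) : sl (Fin 2) F × (Fin 2 → F)) = -(0,z) := Prod.ext (neg_zero).symm rfl
    rw [e, map_neg, LinearMap.neg_apply]
  have hBqs : ∀ (c : F) (z : Fin 2 → F) a, B ((0 : sl (Fin 2) F), c • z) a = c * B (0, z) a := by
    intro c z a
    have e : ((0, c • z) : sl (Fin 2) F × (Fin 2 → F)) = c • (0,z) :=
      Prod.ext (smul_zero c).symm rfl
    rw [e, map_smul, LinearMap.smul_apply, smul_eq_mul]
  have hBqa : ∀ (z₁ z₂ : Fin 2 → F) a,
      B ((0 : sl (Fin 2) F), z₁ + z₂) a = B (0, z₁) a + B (0, z₂) a := by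
    intro z₁ z₂ a
    have e : ((0, z₁ + z₂) : sl (Fin 2) F × (Fin 2 → F)) = (0,z₁) + (0,z₂) :=
      Prod.ext (add_zero 0).symm rfl
    rw [e, map_add, LinearMap.add_apply]
  have hBps : ∀ (c : F) (x : sl (Fin 2) F) a,
      B (c • x, (0 : Fin 2 → F)) a = c * B (x, 0) a := by
    intro c x a
    have e : ((c • x, 0) : sl (Fin 2) F × (Fin 2 → F)) = c • (x,0) :=
      Prod.ext rfl (smul_zero c).symm
    rw [e, map_smul, LinearMap.smul_apply, smul_eq_mul]
  have hBpa : ∀ (x₁ x₂ : sl (Fin 2) F) a,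
      B (x₁ + x₂, (0 : Fin 2 → F)) a = B (x₁, 0) a + B (x₂, 0) a := by
    intro x₁ x₂ a
    have e : ((x₁ + x₂, 0) : sl (Fin 2) F × (Fin 2 → F)) = (x₁,0) + (x₂,0) :=
      Prod.ext rfl (add_zero 0).symm
    rw [e, map_add, LinearMap.add_apply]
  -- key relations from the cyclic identity
  have key1 : ∀ (x : sl (Fin 2) F) (u w : Fin 2 → F),
      B (0, (x : Matrix (Fin 2) (Fin 2) F).mulVec u) (0, w)
        = B (0, (x : Matrix (Fin 2) (Fin 2) F).mulVec w) (0, u) := by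
    intro x u w
    have h := hcyc (x, 0) (0, u) (0, w)
    simp only [lie_zero, zero_lie, ZeroMemClass.coe_zero, Matrix.zero_mulVec,
      Matrix.mulVec_zero, sub_zero, zero_sub, sub_self] at h
    rw [hBzero, hBneg] at h
    linear_combination h
  have key2 : ∀ (x y : sl (Fin 2) F) (w : Fin 2 → F),
      B (⁅x, y⁆, (0 : Fin 2 → F)) (0, w)
        + B (0, (y : Matrix (Fin 2) (Fin 2) F).mulVec w) (x, 0)
        - B (0, (x : Matrix (Fin 2) (Fin 2) F).mulVec w) (y, 0) = 0 := by
    intro x y w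
    have h := hcyc (x, 0) (y, 0) (0, w)
    simp only [lie_zero, zero_lie, ZeroMemClass.coe_zero, Matrix.zero_mulVec,
      Matrix.mulVec_zero, sub_zero, zero_sub, sub_self] at h
    rw [hBneg] at h
    linear_combination h
  -- concrete matrices and actions
  have cH : ((slH F : sl (Fin 2) F) : Matrix (Fin 2) (Fin 2) F) = !![1,0;0,-1] := rfl
  have cE : ((slE F : sl (Fin 2) F) : Matrix (Fin 2) (Fin 2) F) = !![0,1;0,0] := rfl
  have cF : ((slF F : sl (Fin 2) F) : Matrix (Fin 2) (Fin 2) F) = !![0,0;1,0] := rfl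
  have mH1 : (!![(1:F),0;0,-1]).mulVec ![1,0] = ![1,0] := by
    funext i; fin_cases i <;> simp [Matrix.mulVec, dotProduct, Fin.sum_univ_two]
  have mH2 : (!![(1:F),0;0,-1]).mulVec ![0,1] = -![0,1] := by
    funext i; fin_cases i <;> simp [Matrix.mulVec, dotProduct, Fin.sum_univ_two]
  have mE1 : (!![(0:F),1;0,0]).mulVec ![1,0] = 0 := by
    funext i; fin_cases i <;> simp [Matrix.mulVec, dotProduct, Fin.sum_univ_two]
  have mE2 : (!![(0:F),1;0,0]).mulVec ![0,1] = ![1,0] := by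
    funext i; fin_cases i <;> simp [Matrix.mulVec, dotProduct, Fin.sum_univ_two]
  have mF1 : (!![(0:F),0;1,0]).mulVec ![1,0] = ![0,1] := by
    funext i; fin_cases i <;> simp [Matrix.mulVec, dotProduct, Fin.sum_univ_two]
  have mF2 : (!![(0:F),0;1,0]).mulVec ![0,1] = 0 := by
    funext i; fin_cases i <;> simp [Matrix.mulVec, dotProduct, Fin.sum_univ_two]
  -- second-slot linearity
  have hBqa' : ∀ (z₁ z₂ : Fin 2 → F) a,
      B a ((0 : sl (Fin 2) F), z₁ + z₂) = B a (0, z₁) + B a (0, z₂) := by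
    intro z₁ z₂ a
    rw [hsymm a, hBqa, hsymm ((0 : sl (Fin 2) F), z₁) a, hsymm ((0 : sl (Fin 2) F), z₂) a]
  have hBqs' : ∀ (c : F) (z : Fin 2 → F) a,
      B a ((0 : sl (Fin 2) F), c • z) = c * B a (0, z) := by
    intro c z a
    rw [hsymm a, hBqs, hsymm ((0 : sl (Fin 2) F), z) a]
  -- β = 0 on basis
  have hb12 : B ((0 : sl (Fin 2) F), ![(1:F),0]) (0, ![0,1]) = 0 := by
    have h := key1 (slH F) ![1,0] ![0,1]
    rw [cH, mH1, mH2, hBneg] at h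
    have hXY := hsymm ((0 : sl (Fin 2) F), (![0,1] : Fin 2 → F)) (0, ![1,0])
    have h3 : (2:F) * B ((0 : sl (Fin 2) F), ![(1:F),0]) (0, ![0,1]) = 0 := by
      linear_combination h - hXY
    exact (mul_eq_zero.mp h3).resolve_left h2
  have hb21 : B ((0 : sl (Fin 2) F), ![(0:F),1]) (0, ![1,0]) = 0 := by
    rw [hsymm]; exact hb12
  have hb11 : B ((0 : sl (Fin 2) F), ![(1:F),0]) (0, ![1,0]) = 0 := by
    have h := key1 (slE F) ![0,1] ![1,0]
    rw [cE, mE2, mE1] at h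
    rw [h]
    have e : ((0, (0 : Fin 2 → F)) : sl (Fin 2) F × (Fin 2 → F)) = 0 := rfl
    rw [e, map_zero, LinearMap.zero_apply]
  have hb22 : B ((0 : sl (Fin 2) F), ![(0:F),1]) (0, ![0,1]) = 0 := by
    have h := key1 (slF F) ![1,0] ![0,1]
    rw [cF, mF1, mF2] at h
    rw [h]
    have e : ((0, (0 : Fin 2 → F)) : sl (Fin 2) F × (Fin 2 → F)) = 0 := rfl
    rw [e, map_zero, LinearMap.zero_apply]
  have expand : ∀ z : Fin 2 → F, z = z 0 • ![(1:F),0] + z 1 • ![0,1] := by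
    intro z; funext i; fin_cases i <;> simp
  have hbeta : ∀ u z : Fin 2 → F, B ((0 : sl (Fin 2) F), u) (0, z) = 0 := by
    intro u z
    rw [expand u, expand z]
    simp only [hBqa, hBqs, hBqa', hBqs']
    rw [hb11, hb12, hb21, hb22]
    ring
  -- the six γ relations
  have hA := key2 (slH F) (slE F) ![1,0]
  rw [lie_HE, hBps, cH, cE, mE1, mH1, hBzero,
    hsymm ((0 : sl (Fin 2) F), ![(1:F),0]) (slE F, 0)] at hA
  have hB' := key2 (slH F) (slE F) ![0,1]
  rw [lie_HE, hBps, cH, cE, mE2, mH2, hBneg,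
    hsymm ((0 : sl (Fin 2) F), ![(1:F),0]) (slH F, 0),
    hsymm ((0 : sl (Fin 2) F), ![(0:F),1]) (slE F, 0)] at hB'
  have hC := key2 (slH F) (slF F) ![1,0]
  rw [lie_HF, hBps, cH, cF, mF1, mH1,
    hsymm ((0 : sl (Fin 2) F), ![(0:F),1]) (slH F, 0),
    hsymm ((0 : sl (Fin 2) F), ![(1:F),0]) (slF F, 0)] at hC
  have hD := key2 (slH F) (slF F) ![0,1]
  rw [lie_HF, hBps, cH, cF, mF2, mH2, hBzero, hBneg,
    hsymm ((0 : sl (Fin 2) F), ![(0:F),1]) (slF F, 0)] at hD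
  have hE' := key2 (slE F) (slF F) ![1,0]
  rw [lie_EF, cE, cF, mF1, mE1, hBzero,
    hsymm ((0 : sl (Fin 2) F), ![(0:F),1]) (slE F, 0)] at hE'
  have hF' := key2 (slE F) (slF F) ![0,1]
  rw [lie_EF, cE, cF, mF2, mE2, hBzero,
    hsymm ((0 : sl (Fin 2) F), ![(1:F),0]) (slF F, 0)] at hF'
  -- solve for the six values
  have gE2 : B (slE F, (0 : Fin 2 → F)) (0, ![0,1]) = 0 := by
    have h3 : (2:F) * B (slE F, (0 : Fin 2 → F)) (0, ![0,1]) = 0 := by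
      linear_combination hB' - hE'
    exact (mul_eq_zero.mp h3).resolve_left h2
  have gH1 : B (slH F, (0 : Fin 2 → F)) (0, ![1,0]) = 0 := by linear_combination hE' - gE2
  have gF1 : B (slF F, (0 : Fin 2 → F)) (0, ![1,0]) = 0 := by
    have h3 : (2:F) * B (slF F, (0 : Fin 2 → F)) (0, ![1,0]) = 0 := by
      linear_combination hF' - hC
    exact (mul_eq_zero.mp h3).resolve_left h2
  have gH2 : B (slH F, (0 : Fin 2 → F)) (0, ![0,1]) = 0 := by linear_combination hF' + gF1
  have gE1 : B (slE F, (0 : Fin 2 → F)) (0, ![1,0]) = 0 := by linear_combination hA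
  have gF2 : B (slF F, (0 : Fin 2 → F)) (0, ![0,1]) = 0 := by linear_combination -hD
  -- γ = 0 in general
  have hgamma : ∀ (y : sl (Fin 2) F) (z : Fin 2 → F), B (y, 0) (0, z) = 0 := by
    intro y z
    have hy := sl_decomp F y
    rw [show ((y, (0 : Fin 2 → F)) : sl (Fin 2) F × (Fin 2 → F))
        = ((y.val 0 0) • slH F + (y.val 0 1) • slE F + (y.val 1 0) • slF F, 0) from by
      rw [← hy]]
    simp only [hBpa, hBps]
    rw [expand z]
    simp only [hBqa', hBqs']
    rw [gH1, gH2, gE1, gE2, gF1, gF2]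
    ring
  intro v a
  obtain ⟨y, w⟩ := a
  have split : ((y, w) : sl (Fin 2) F × (Fin 2 → F)) = (y, 0) + (0, w) :=
    Prod.ext (add_zero y).symm (zero_add w).symm
  rw [split, map_add, hsymm ((0 : sl (Fin 2) F), v) (y, 0), hgamma, hbeta, add_zero]
end

section
/- Let F be a field of characteristic not 2 or 3, and let g = gl(2,F) +_π F² be the semidirect product defined by the natural action of gl(2,F) on F². Then every cyclic metric B on g satisfies B(F², g) = 0. -/
/-!
Write `h v := B (0, v) (1, 0)`. The cyclic identity for the triples `(x, 0), (1, 0), (0, u)`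
gives `B (0, u) (x, 0) = h (x u)`; for `(x, 0), (y, 0), (0, u)` together with symmetry it then
gives `2 h ([x, y] u) = 0`. Since `[E_ik, E_ki] e_i = e_i`, `h` vanishes. For
`(x, 0), (0, u), (0, w)` it gives `B (0, x u) (0, w) = B (0, x w) (0, u)`, and taking `x = E_ik`,
`u = e_k`, `w = e_l` with `k ≠ l` shows that `B` vanishes on `F² × F²`.
-/

open Matrix

namespace Matrix

variable {R n : Type*} [CommRing R] [Fintype n] [DecidableEq n]

theorem single_mulVec_single_same (i k : n) (a b : R) :
    single i k a *ᵥ Pi.single k b = Pi.single i (a * b) := by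
  rw [single_mulVec, Pi.single_eq_same]
  rfl

theorem single_mulVec_single_of_ne (i : n) {k l : n} (hkl : k ≠ l) (a b : R) :
    single i k a *ᵥ Pi.single l b = 0 := by
  rw [single_mulVec, Pi.single_eq_of_ne hkl, mul_zero]
  exact Function.update_eq_self i (0 : n → R)

end Matrix

section Bilinear

variable {R M N P Q : Type*} [CommRing R] [AddCommGroup M] [AddCommGroup N] [AddCommGroup P]
  [AddCommGroup Q] [Module R M] [Module R N] [Module R P] [Module R Q]
  (B : M × N →ₗ[R] P →ₗ[R] Q)

theorem LinearMap.apply_zero_neg_apply (v : N) (c : P) : B (0, -v) c = -B (0, v) c := by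
  rw [← LinearMap.neg_apply, ← map_neg, Prod.neg_mk, neg_zero]

theorem LinearMap.apply_zero_sub_apply (v w : N) (c : P) :
    B (0, v - w) c = B (0, v) c - B (0, w) c := by
  rw [← LinearMap.sub_apply, ← map_sub, Prod.mk_sub_mk, sub_zero]

end Bilinear

namespace MatrixSemidirect

variable {R n : Type*} [CommRing R] [Fintype n] [DecidableEq n]

def bracket (a b : Matrix n n R × (n → R)) : Matrix n n R × (n → R) :=
  (a.1 * b.1 - b.1 * a.1, a.1 *ᵥ b.2 - b.1 *ᵥ a.2)

def IsCyclic (B : (Matrix n n R × (n → R)) →ₗ[R] (Matrix n n R × (n → R)) →ₗ[R] R) : Prop :=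
  ∀ a b c, B (bracket a b) c + B (bracket b c) a + B (bracket c a) b = 0

namespace IsCyclic

variable {B : (Matrix n n R × (n → R)) →ₗ[R] (Matrix n n R × (n → R)) →ₗ[R] R}

theorem apply_mulVec_comm (hB : IsCyclic B) (x : Matrix n n R) (u w : n → R) :
    B (0, x *ᵥ u) (0, w) = B (0, x *ᵥ w) (0, u) := by
  have h := hB (x, 0) (0, u) (0, w)
  simp only [bracket, mul_zero, zero_mul, sub_self, mulVec_zero, zero_mulVec, sub_zero,
    zero_sub, Prod.mk_zero_zero, map_zero, LinearMap.zero_apply, add_zero,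
    B.apply_zero_neg_apply] at h
  linear_combination h

theorem apply_inr_inl (hB : IsCyclic B) (x : Matrix n n R) (u : n → R) :
    B (0, u) (x, 0) = B (0, x *ᵥ u) (1, 0) := by
  have h := hB (x, 0) (1, 0) (0, u)
  simp only [bracket, mul_one, one_mul, mul_zero, zero_mul, sub_self, sub_zero, mulVec_zero,
    one_mulVec, zero_sub, Prod.mk_zero_zero, map_zero, LinearMap.zero_apply,
    zero_add, B.apply_zero_neg_apply] at h
  linear_combination h

theorem two_mul_apply_commutator_mulVec (hB : IsCyclic B) (hsymm : ∀ a b, B a b = B b a)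
    (x y : Matrix n n R) (u : n → R) :
    2 * B (0, (x * y - y * x) *ᵥ u) (1, 0) = 0 := by
  have h := hB (x, 0) (y, 0) (0, u)
  simp only [bracket, mul_zero, zero_mul, sub_self, mulVec_zero, sub_zero,
    zero_sub, B.apply_zero_neg_apply] at h
  rw [hsymm (x * y - y * x, 0), hB.apply_inr_inl (x * y - y * x), hB.apply_inr_inl x,
    hB.apply_inr_inl y, mulVec_mulVec, mulVec_mulVec] at h
  rw [sub_mulVec, B.apply_zero_sub_apply] at h ⊢
  linear_combination h

theorem apply_commutator_mulVec_eq_zero [NoZeroDivisors R] (h2 : (2 : R) ≠ 0) (hB : IsCyclic B)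
    (hsymm : ∀ a b, B a b = B b a) (x y : Matrix n n R) (u : n → R) :
    B (0, (x * y - y * x) *ᵥ u) (1, 0) = 0 :=
  (mul_eq_zero.mp (hB.two_mul_apply_commutator_mulVec hsymm x y u)).resolve_left h2

theorem apply_inr_one_eq_zero [NoZeroDivisors R] [Nontrivial n] (h2 : (2 : R) ≠ 0) (hB : IsCyclic B)
    (hsymm : ∀ a b, B a b = B b a) (v : n → R) :
    B (0, v) (1, 0) = 0 := by
  have h : B.flip (1, 0) ∘ₗ LinearMap.inr R _ _ = 0 :=
    (Pi.basisFun R n).ext fun i => by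
      obtain ⟨k, hki⟩ := exists_ne i
      have h := hB.apply_commutator_mulVec_eq_zero h2 hsymm (single i k 1) (single k i 1)
        (Pi.single i 1)
      rw [sub_mulVec, ← mulVec_mulVec, ← mulVec_mulVec, single_mulVec_single_of_ne i hki,
        mulVec_zero, sub_zero, single_mulVec_single_same, single_mulVec_single_same,
        mul_one, mul_one] at h
      simpa using h
  exact LinearMap.congr_fun h v

theorem apply_single_single_eq_zero (hB : IsCyclic B) {k l : n} (hkl : k ≠ l) (i : n) :
    B (0, Pi.single i 1) (0, Pi.single l 1) = 0 := by
  have h := hB.apply_mulVec_comm (single i k 1) (Pi.single k 1) (Pi.single l 1)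
  rwa [single_mulVec_single_same, single_mulVec_single_of_ne i hkl, mul_one, Prod.mk_zero_zero,
    map_zero, LinearMap.zero_apply] at h

theorem apply_inr_inr_eq_zero [Nontrivial n] (hB : IsCyclic B) (v w : n → R) :
    B (0, v) (0, w) = 0 := by
  have h : B.compl₁₂ (LinearMap.inr R _ _) (LinearMap.inr R _ _) = 0 :=
    LinearMap.ext_basis (Pi.basisFun R n) (Pi.basisFun R n) fun i l => by
      obtain ⟨k, hkl⟩ := exists_ne l
      simpa using hB.apply_single_single_eq_zero hkl i
  exact LinearMap.congr_fun₂ h v w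

end IsCyclic

end MatrixSemidirect

open MatrixSemidirect in
theorem cyclic_metric_gl2_semidirect_vanishes_on_radical_general
    {F : Type*} [Field F]
    (hchar2 : ringChar F ≠ 2)
    (B : (Matrix (Fin 2) (Fin 2) F × (Fin 2 → F)) →ₗ[F]
          (Matrix (Fin 2) (Fin 2) F × (Fin 2 → F)) →ₗ[F] F)
    (hsymm : ∀ a b : Matrix (Fin 2) (Fin 2) F × (Fin 2 → F), B a b = B b a)
    (hcyc : ∀ a b c : Matrix (Fin 2) (Fin 2) F × (Fin 2 → F),
      B (a.1 * b.1 - b.1 * a.1, a.1.mulVec b.2 - b.1.mulVec a.2) c +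
      B (b.1 * c.1 - c.1 * b.1, b.1.mulVec c.2 - c.1.mulVec b.2) a +
      B (c.1 * a.1 - a.1 * c.1, c.1.mulVec a.2 - a.1.mulVec c.2) b = 0) :
    ∀ (v : Fin 2 → F) (a : Matrix (Fin 2) (Fin 2) F × (Fin 2 → F)), B (0, v) a = 0 := by
  have hB : IsCyclic B := hcyc
  rintro v ⟨y, w⟩
  rw [← add_zero y, ← zero_add w, ← Prod.mk_add_mk, map_add, hB.apply_inr_inr_eq_zero, add_zero,
    hB.apply_inr_inl, hB.apply_inr_one_eq_zero (Ring.two_ne_zero hchar2) hsymm]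

/-- Every cyclic metric B on the semidirect product g = gl(2,F) +_π F²
(natural action, F² an Abelian ideal) satisfies B(F², g) = 0.  The semidirect product
bracket is [(x,u),(y,v)] = ([x,y], x·v − y·u), where [x,y] = xy − yx in gl(2,F). -/
theorem cyclic_metric_gl2_semidirect_vanishes_on_radical
    {F : Type*} [Field F]
    (hchar2 : ringChar F ≠ 2) (hchar3 : ringChar F ≠ 3)
    (B : (Matrix (Fin 2) (Fin 2) F × (Fin 2 → F)) →ₗ[F]
          (Matrix (Fin 2) (Fin 2) F × (Fin 2 → F)) →ₗ[F] F)
    (hsymm : ∀ a b : Matrix (Fin 2) (Fin 2) F × (Fin 2 → F), B a b = B b a)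
    (hcyc : ∀ a b c : Matrix (Fin 2) (Fin 2) F × (Fin 2 → F),
      B (a.1 * b.1 - b.1 * a.1, a.1.mulVec b.2 - b.1.mulVec a.2) c +
      B (b.1 * c.1 - c.1 * b.1, b.1.mulVec c.2 - c.1.mulVec b.2) a +
      B (c.1 * a.1 - a.1 * c.1, c.1.mulVec a.2 - a.1.mulVec c.2) b = 0) :
    ∀ (v : Fin 2 → F) (a : Matrix (Fin 2) (Fin 2) F × (Fin 2 → F)), B (0, v) a = 0 :=
  cyclic_metric_gl2_semidirect_vanishes_on_radical_general hchar2 B hsymm hcyc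
end

section
/- A symmetric bilinear form B on sl(2,F) (char F ≠ 2,3) with basis H, X, Y satisfying [H,X]=2X, [H,Y]=−2Y, [X,Y]=H, is cyclic if and only if 4·B(X,Y) + B(H,H) = 0. -/
/-!
For any bilinear form `B` on a Lie algebra, the cyclic sum
`B ⁅x, y⁆ z + B ⁅y, z⁆ x + B ⁅z, x⁆ y` is an alternating trilinear form, by antisymmetry of the
bracket. On a three-dimensional space an alternating trilinear form is a multiple of the
determinant, so it vanishes as soon as it vanishes at the basis `(H, X, Y)`, where it equals
`2 B(X, Y) + B(H, H) + 2 B(Y, X) = 4 B(X, Y) + B(H, H)` by symmetry of `B`.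
-/

namespace LinearMap

variable {R L M : Type*} [CommRing R] [LieRing L] [LieAlgebra R L] [AddCommGroup M] [Module R M]

theorem apply_lie_add_apply_lie_swap (B : L →ₗ[R] L →ₗ[R] M) (x y z : L) :
    B ⁅x, y⁆ z + B ⁅y, x⁆ z = 0 := by
  rw [← lie_skew x y, map_neg, neg_apply, neg_add_cancel]

def cyclicForm (B : L →ₗ[R] L →ₗ[R] M) : L [⋀^Fin 3]→ₗ[R] M where
  toMultilinearMap := MultilinearMap.mk'
    (fun v => B ⁅v 0, v 1⁆ (v 2) + B ⁅v 1, v 2⁆ (v 0) + B ⁅v 2, v 0⁆ (v 1))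
    (fun v i x y => by
      fin_cases i <;>
        simp only [Fin.zero_eta, Fin.mk_one, Fin.reduceFinMk, Fin.isValue, ne_eq, Fin.reduceEq,
          not_false_eq_true, Function.update_self, Function.update_of_ne, lie_add, add_lie,
          map_add, add_apply] <;>
        abel)
    (fun v i c x => by fin_cases i <;> simp)
  map_eq_zero_of_eq' v i j hij hne := by
    fin_cases i <;> fin_cases j <;> simp_all [B.apply_lie_add_apply_lie_swap]

@[simp]
theorem cyclicForm_apply (B : L →ₗ[R] L →ₗ[R] M) (v : Fin 3 → L) :
    B.cyclicForm v = B ⁅v 0, v 1⁆ (v 2) + B ⁅v 1, v 2⁆ (v 0) + B ⁅v 2, v 0⁆ (v 1) := rfl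

theorem cyclicForm_eq_zero_iff (B : L →ₗ[R] L →ₗ[R] M) :
    B.cyclicForm = 0 ↔ ∀ x y z : L, B ⁅x, y⁆ z + B ⁅y, z⁆ x + B ⁅z, x⁆ y = 0 := by
  refine ⟨fun h x y z => by simpa using congr($h ![x, y, z]), fun h => ?_⟩
  ext v
  exact h _ _ _

end LinearMap

theorem sl2_cyclic_iff_general
    {F L : Type*} [Field F] [LieRing L] [LieAlgebra F L]
    (H X Y : L) (b : Module.Basis (Fin 3) F L) (hb : ⇑b = ![H, X, Y])
    (hHX : ⁅H, X⁆ = (2 : F) • X) (hHY : ⁅H, Y⁆ = -((2 : F) • Y)) (hXY : ⁅X, Y⁆ = H)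
    (B : L →ₗ[F] L →ₗ[F] F)
    (hsymm : ∀ x y : L, B x y = B y x) :
    (∀ x y z : L, B ⁅x, y⁆ z + B ⁅y, z⁆ x + B ⁅z, x⁆ y = 0) ↔
      4 * B X Y + B H H = 0 := by
  have hYH : ⁅Y, H⁆ = (2 : F) • Y := by rw [← lie_skew, hHY, neg_neg]
  rw [← B.cyclicForm_eq_zero_iff, ← AlternatingMap.map_basis_eq_zero_iff b,
    LinearMap.cyclicForm_apply, hb]
  simp only [Matrix.cons_val_zero, Matrix.cons_val_one, Matrix.cons_val_two, Matrix.head_cons,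
    Matrix.tail_cons, hHX, hXY, hYH, map_smul, LinearMap.smul_apply, smul_eq_mul]
  rw [hsymm Y X]
  constructor <;> intro h <;> linear_combination h

/-- A symmetric bilinear form B on sl(2,F) (basis H, X, Y with
[H,X]=2X, [H,Y]=−2Y, [X,Y]=H; char F ≠ 2,3) is cyclic iff 4·B(X,Y) + B(H,H) = 0. -/
theorem sl2_cyclic_iff
    {F L : Type*} [Field F] [LieRing L] [LieAlgebra F L]
    (hchar2 : ringChar F ≠ 2) (hchar3 : ringChar F ≠ 3)
    (H X Y : L) (b : Module.Basis (Fin 3) F L) (hb : ⇑b = ![H, X, Y])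
    (hHX : ⁅H, X⁆ = (2 : F) • X) (hHY : ⁅H, Y⁆ = -((2 : F) • Y)) (hXY : ⁅X, Y⁆ = H)
    (B : L →ₗ[F] L →ₗ[F] F)
    (hsymm : ∀ x y : L, B x y = B y x) :
    (∀ x y z : L, B ⁅x, y⁆ z + B ⁅y, z⁆ x + B ⁅z, x⁆ y = 0) ↔
      4 * B X Y + B H H = 0 :=
  sl2_cyclic_iff_general H X Y b hb hHX hHY hXY B hsymm
end

section
/- Let g = so(3,F) +_π F³ be the semidirect product given by the natural action of so(3,F) on F³ (char F ≠ 2,3). A symmetric bilinear form on g whose matrix, with respect to the basis {i, j, k, e₁, e₂, e₃}, has block form [[P, Q],[Qᵀ, 0]] (P symmetric), is cyclic if and only if P and Q are symmetric and tr(P) = tr(Q) = 0. -/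
/-!
For any bilinear `B`, the cyclic sum `B ⁅x, y⁆ z + B ⁅y, z⁆ x + B ⁅z, x⁆ y` is an alternating
trilinear form, so it vanishes as soon as it vanishes on the twenty increasing triples of basis
vectors. On these triples the bracket table and `B(eₐ, e_c) = 0` reduce it to `tr P` on `(i, j, k)`,
to `± tr Q` or an entry `Q_ab - Q_ba` on two vectors of `so(3)` and one `e_c`, and to `0` otherwise.
-/

namespace LinearMap

variable {ι R M N : Type*} [LinearOrder ι] [CommRing R] [AddCommGroup M] [Module R M]
  [AddCommGroup N] [Module R N]

theorem eq_zero_iff_apply_basis_lt (T : M →ₗ[R] M →ₗ[R] M →ₗ[R] N) (b : Module.Basis ι R M)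
    (cyclic : ∀ x y z, T y z x = T x y z) (swap : ∀ x y z, T y x z = -T x y z)
    (self_left : ∀ x z, T x x z = 0) :
    T = 0 ↔ ∀ p q r, p < q → q < r → T (b p) (b q) (b r) = 0 := by
  refine ⟨fun hT _ _ _ _ _ => by simp [hT], fun h => ?_⟩
  have sorted : ∀ p q r, p ≤ q → q ≤ r → T (b p) (b q) (b r) = 0 := by
    intro p q r hpq hqr
    rcases hpq.eq_or_lt with rfl | hpq
    · exact self_left _ _
    rcases hqr.eq_or_lt with rfl | hqr
    · rw [← cyclic, self_left]
    exact h p q r hpq hqr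
  refine b.ext fun p => b.ext fun q => b.ext fun r => ?_
  rw [zero_apply, zero_apply, zero_apply]
  wlog hpq : p ≤ q generalizing p q r
  · rw [← neg_eq_zero, ← swap, this q p r (le_of_not_ge hpq)]
  rcases le_total q r with hqr | hrq
  · exact sorted p q r hpq hqr
  rcases le_total p r with hpr | hrp
  · rw [← neg_eq_zero, ← swap, ← cyclic, sorted p r q hpr hrq]
  · rw [← cyclic, ← cyclic, sorted r p q hrp hpq]

end LinearMap

namespace LieAlgebra

variable {R L : Type*} [CommRing R] [LieRing L] [LieAlgebra R L]

def cyclicForm (B : L →ₗ[R] L →ₗ[R] R) : L →ₗ[R] L →ₗ[R] L →ₗ[R] R :=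
  LinearMap.mk₂ R
    (fun x y =>
      { toFun := fun z => B ⁅x, y⁆ z + B ⁅y, z⁆ x + B ⁅z, x⁆ y
        map_add' := fun z z' => by
          simp only [map_add, lie_add, add_lie, LinearMap.add_apply]; ring
        map_smul' := fun c z => by
          simp only [map_smul, lie_smul, smul_lie, LinearMap.smul_apply, smul_eq_mul,
            RingHom.id_apply]; ring })
    (fun x x' y => by
      ext z; simp only [map_add, lie_add, add_lie, LinearMap.add_apply, LinearMap.coe_mk,
        AddHom.coe_mk]; ring)
    (fun c x y => by
      ext z; simp only [map_smul, lie_smul, smul_lie, LinearMap.smul_apply, smul_eq_mul,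
        LinearMap.coe_mk, AddHom.coe_mk]; ring)
    (fun x y y' => by
      ext z; simp only [map_add, lie_add, add_lie, LinearMap.add_apply, LinearMap.coe_mk,
        AddHom.coe_mk]; ring)
    (fun c x y => by
      ext z; simp only [map_smul, lie_smul, smul_lie, LinearMap.smul_apply, smul_eq_mul,
        LinearMap.coe_mk, AddHom.coe_mk]; ring)

variable (B : L →ₗ[R] L →ₗ[R] R)

@[simp]
theorem cyclicForm_apply (x y z : L) :
    cyclicForm B x y z = B ⁅x, y⁆ z + B ⁅y, z⁆ x + B ⁅z, x⁆ y := rfl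

theorem cyclicForm_eq_zero_iff :
    cyclicForm B = 0 ↔ ∀ x y z : L, B ⁅x, y⁆ z + B ⁅y, z⁆ x + B ⁅z, x⁆ y = 0 := by
  simp only [LinearMap.ext_iff, cyclicForm_apply, LinearMap.zero_apply]

theorem cyclicForm_apply_of_symm (hB : ∀ x y, B x y = B y x) (x y z : L) :
    cyclicForm B x y z = B ⁅x, y⁆ z + B x ⁅y, z⁆ - B y ⁅x, z⁆ := by
  rw [cyclicForm_apply, ← lie_skew z x, map_neg, LinearMap.neg_apply, hB ⁅y, z⁆, hB ⁅x, z⁆,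
    sub_eq_add_neg]

theorem cyclicForm_cyclic (x y z : L) : cyclicForm B y z x = cyclicForm B x y z := by
  simp only [cyclicForm_apply]; ring

theorem cyclicForm_swap (x y z : L) : cyclicForm B y x z = -cyclicForm B x y z := by
  simp only [cyclicForm_apply, ← lie_skew x y, ← lie_skew y z, ← lie_skew z x, map_neg,
    LinearMap.neg_apply]; ring

theorem cyclicForm_self_left (x z : L) : cyclicForm B x x z = 0 := by
  simp only [cyclicForm_apply, lie_self, map_zero, LinearMap.zero_apply, ← lie_skew z x,
    map_neg, LinearMap.neg_apply]; ring

theorem cyclicForm_eq_zero_iff_basis {ι : Type*} [LinearOrder ι] (b : Module.Basis ι R L) :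
    cyclicForm B = 0 ↔ ∀ p q r, p < q → q < r → cyclicForm B (b p) (b q) (b r) = 0 :=
  (cyclicForm B).eq_zero_iff_apply_basis_lt b (cyclicForm_cyclic B) (cyclicForm_swap B)
    (cyclicForm_self_left B)

end LieAlgebra

open LieAlgebra in
theorem so3_semidirect_cyclic_iff_general
    {F L : Type*} [Field F] [LieRing L] [LieAlgebra F L]
    (I J K E₁ E₂ E₃ : L) (b : Module.Basis (Fin 6) F L)
    (hb : ⇑b = ![I, J, K, E₁, E₂, E₃])
    (hIJ : ⁅I, J⁆ = K) (hJK : ⁅J, K⁆ = I) (hKI : ⁅K, I⁆ = J)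
    (hIE₁ : ⁅I, E₁⁆ = 0) (hIE₂ : ⁅I, E₂⁆ = E₃) (hIE₃ : ⁅I, E₃⁆ = -E₂)
    (hJE₁ : ⁅J, E₁⁆ = -E₃) (hJE₂ : ⁅J, E₂⁆ = 0) (hJE₃ : ⁅J, E₃⁆ = E₁)
    (hKE₁ : ⁅K, E₁⁆ = E₂) (hKE₂ : ⁅K, E₂⁆ = -E₁) (hKE₃ : ⁅K, E₃⁆ = 0)
    (hEE : ∀ a c : Fin 3, ⁅![E₁, E₂, E₃] a, ![E₁, E₂, E₃] c⁆ = 0)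
    (B : L →ₗ[F] L →ₗ[F] F)
    (hsymm : ∀ x y : L, B x y = B y x)
    (hblock : ∀ a c : Fin 3, B (![E₁, E₂, E₃] a) (![E₁, E₂, E₃] c) = 0) :
    (∀ x y z : L, B ⁅x, y⁆ z + B ⁅y, z⁆ x + B ⁅z, x⁆ y = 0) ↔
      ((Matrix.of fun a c => B (![I, J, K] a) (![I, J, K] c) :
          Matrix (Fin 3) (Fin 3) F).IsSymm ∧
       (Matrix.of fun a c => B (![I, J, K] a) (![E₁, E₂, E₃] c) :
          Matrix (Fin 3) (Fin 3) F).IsSymm ∧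
       (Matrix.of fun a c => B (![I, J, K] a) (![I, J, K] c) :
          Matrix (Fin 3) (Fin 3) F).trace = 0 ∧
       (Matrix.of fun a c => B (![I, J, K] a) (![E₁, E₂, E₃] c) :
          Matrix (Fin 3) (Fin 3) F).trace = 0) := by
  have hIK : ⁅I, K⁆ = -J := by rw [← lie_skew, hKI]
  have hP : (Matrix.of fun a c => B (![I, J, K] a) (![I, J, K] c) :
      Matrix (Fin 3) (Fin 3) F).IsSymm := Matrix.IsSymm.ext fun _ _ => hsymm _ _
  rw [← cyclicForm_eq_zero_iff, cyclicForm_eq_zero_iff_basis B b, hb]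
  simp +decide only [Fin.forall_fin_succ, Fin.isValue, Fin.succ_zero_eq_one, Fin.succ_one_eq_two,
    IsEmpty.forall_iff, forall_const, and_true, true_and, Matrix.cons_val_zero,
    Matrix.cons_val_succ] at hEE hblock ⊢
  -- On an increasing triple only brackets `⁅b p, b q⁆` with `p < q` occur.
  simp only [cyclicForm_apply_of_symm B hsymm, hIJ, hJK, hIK, hIE₁, hIE₂, hIE₃, hJE₁, hJE₂, hJE₃,
    hKE₁, hKE₂, hKE₃, hEE, hblock, map_neg, map_zero, LinearMap.neg_apply, LinearMap.zero_apply,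
    sub_self, sub_zero, add_zero, neg_zero, and_true, true_and, hP, Matrix.IsSymm.ext_iff,
    Matrix.trace_fin_three, Fin.forall_fin_succ, IsEmpty.forall_iff, Matrix.of_apply,
    Fin.succ_zero_eq_one, Fin.succ_one_eq_two, Matrix.cons_val_zero, Matrix.cons_val_one,
    Matrix.cons_val_two, Matrix.head_cons, Matrix.tail_cons]
  -- Both sides are now linear systems in the entries of `P` and `Q`.
  grind

/-- For g = so(3,F) +_π F³ (basis i, j, k, e₁, e₂, e₃ with the listed
brackets), a symmetric bilinear form whose matrix has block form [[P,Q],[Qᵀ,0]]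
(i.e. B(e_a, e_b) = 0) is cyclic iff P and Q are symmetric and tr P = tr Q = 0. -/
theorem so3_semidirect_cyclic_iff
    {F L : Type*} [Field F] [LieRing L] [LieAlgebra F L]
    (hchar2 : ringChar F ≠ 2) (hchar3 : ringChar F ≠ 3)
    (I J K E₁ E₂ E₃ : L) (b : Module.Basis (Fin 6) F L)
    (hb : ⇑b = ![I, J, K, E₁, E₂, E₃])
    (hIJ : ⁅I, J⁆ = K) (hJK : ⁅J, K⁆ = I) (hKI : ⁅K, I⁆ = J)
    (hIE₁ : ⁅I, E₁⁆ = 0) (hIE₂ : ⁅I, E₂⁆ = E₃) (hIE₃ : ⁅I, E₃⁆ = -E₂)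
    (hJE₁ : ⁅J, E₁⁆ = -E₃) (hJE₂ : ⁅J, E₂⁆ = 0) (hJE₃ : ⁅J, E₃⁆ = E₁)
    (hKE₁ : ⁅K, E₁⁆ = E₂) (hKE₂ : ⁅K, E₂⁆ = -E₁) (hKE₃ : ⁅K, E₃⁆ = 0)
    (hEE : ∀ a c : Fin 3, ⁅![E₁, E₂, E₃] a, ![E₁, E₂, E₃] c⁆ = 0)
    (B : L →ₗ[F] L →ₗ[F] F)
    (hsymm : ∀ x y : L, B x y = B y x)
    (hblock : ∀ a c : Fin 3, B (![E₁, E₂, E₃] a) (![E₁, E₂, E₃] c) = 0) :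
    (∀ x y z : L, B ⁅x, y⁆ z + B ⁅y, z⁆ x + B ⁅z, x⁆ y = 0) ↔
      ((Matrix.of fun a c => B (![I, J, K] a) (![I, J, K] c) :
          Matrix (Fin 3) (Fin 3) F).IsSymm ∧
       (Matrix.of fun a c => B (![I, J, K] a) (![E₁, E₂, E₃] c) :
          Matrix (Fin 3) (Fin 3) F).IsSymm ∧
       (Matrix.of fun a c => B (![I, J, K] a) (![I, J, K] c) :
          Matrix (Fin 3) (Fin 3) F).trace = 0 ∧
       (Matrix.of fun a c => B (![I, J, K] a) (![E₁, E₂, E₃] c) :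
          Matrix (Fin 3) (Fin 3) F).trace = 0) :=
  so3_semidirect_cyclic_iff_general I J K E₁ E₂ E₃ b hb hIJ hJK hKI hIE₁ hIE₂ hIE₃ hJE₁ hJE₂ hJE₃
    hKE₁ hKE₂ hKE₃ hEE B hsymm hblock
end

section
/- Let (g, π, V, ρ) be a cyclic quadruple over F, where g is a Lie algebra, π: g → gl(V) a representation, and ρ: g → V* linear with ρ([x,y]) + π*(x)ρ(y) − π*(y)ρ(x) = 0 for all x,y ∈ g. Let B_g be any cyclic metric on g. Then the metric Lie algebra L = g +_π V with Abelian ideal V, bracket [(x,u),(y,v)] = ([x,y], π(x)v − π(y)u), and bilinear form B_L((x,u),(y,v)) = B_g(x,y) + ρ(x)(v) + ρ(y)(u), is a cyclic metric Lie algebra. -/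
attribute [local instance 100] LieRing.ofAssociativeRing

section CyclicQuadruple

variable {R L V : Type*} [CommRing R] [LieRing L] [LieAlgebra R L] [AddCommGroup V] [Module R V]

/-- The condition `ρ [x, y] + π*(x) (ρ y) - π*(y) (ρ x) = 0`, evaluated at `v : V`. -/
def IsCyclicQuadruple (π : L →ₗ⁅R⁆ Module.End R V) (ρ : L →ₗ[R] V →ₗ[R] R) : Prop :=
  ∀ x y : L, ∀ v : V, ρ ⁅x, y⁆ v - ρ y (π x v) + ρ x (π y v) = 0

/-- The `ρ`-part of the cyclic sum of `B_L([(x,u),(y,v)], (z,w))`. -/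
theorem IsCyclicQuadruple.cyclic_sum_eq_zero {π : L →ₗ⁅R⁆ Module.End R V}
    {ρ : L →ₗ[R] V →ₗ[R] R} (hρ : IsCyclicQuadruple π ρ) (x y z : L) (u v w : V) :
    (ρ ⁅x, y⁆ w + ρ z (π x v - π y u)) + (ρ ⁅y, z⁆ u + ρ x (π y w - π z v)) +
      (ρ ⁅z, x⁆ v + ρ y (π z u - π x w)) = 0 := by
  simp only [map_sub]
  linear_combination hρ x y w + hρ y z u + hρ z x v

end CyclicQuadruple

/-- Given a cyclic quadruple (g, π, V, ρ) and any cyclic metric B_g on g,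
the metric Lie algebra L = g +_π V, with bracket [(x,u),(y,v)] = ([x,y], π(x)v − π(y)u)
and bilinear form B_L((x,u),(y,v)) = B_g(x,y) + ρ(x)(v) + ρ(y)(u),
is a cyclic metric Lie algebra (B_L is symmetric and cyclic). -/
theorem cyclic_quadruple_yields_cyclic_metric
    {F L V : Type*} [Field F] [LieRing L] [LieAlgebra F L]
    [AddCommGroup V] [Module F V]
    (π : L →ₗ⁅F⁆ Module.End F V)
    (ρ : L →ₗ[F] (V →ₗ[F] F))
    (hquad : ∀ x y : L, ∀ v : V, ρ ⁅x, y⁆ v - ρ y (π x v) + ρ x (π y v) = 0)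
    (Bg : L →ₗ[F] L →ₗ[F] F)
    (hBgsymm : ∀ x y : L, Bg x y = Bg y x)
    (hBgcyc : ∀ x y z : L, Bg ⁅x, y⁆ z + Bg ⁅y, z⁆ x + Bg ⁅z, x⁆ y = 0) :
    (∀ a b : L × V,
        Bg a.1 b.1 + ρ a.1 b.2 + ρ b.1 a.2 = Bg b.1 a.1 + ρ b.1 a.2 + ρ a.1 b.2) ∧
    (∀ a b c : L × V,
        (Bg ⁅a.1, b.1⁆ c.1 + ρ ⁅a.1, b.1⁆ c.2 + ρ c.1 (π a.1 b.2 - π b.1 a.2)) +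
        (Bg ⁅b.1, c.1⁆ a.1 + ρ ⁅b.1, c.1⁆ a.2 + ρ a.1 (π b.1 c.2 - π c.1 b.2)) +
        (Bg ⁅c.1, a.1⁆ b.1 + ρ ⁅c.1, a.1⁆ b.2 + ρ b.1 (π c.1 a.2 - π a.1 c.2)) = 0) := by
  refine ⟨fun a b => ?_, fun ⟨x, u⟩ ⟨y, v⟩ ⟨z, w⟩ => ?_⟩
  · rw [hBgsymm]
    ring
  · have hρ : IsCyclicQuadruple π ρ := hquad
    linear_combination hBgcyc x y z + hρ.cyclic_sum_eq_zero x y z u v w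
end

section
/- Let g be a Lie algebra with Levi decomposition g = s + r (s semisimple, r the solvable radical). Suppose B is a cyclic metric on g whose restriction to r is non-degenerate. Then [s, r] = 0 and B(s, r) = 0, so (g, B) is the orthogonal direct product of (s, B|_s) and (r, B|_r). -/
/-!
Let `W` be the `B`-orthogonal complement of the radical `r`, so that `L = W ⊕ r`. Cyclicity makes
`W` a subalgebra whose elements act `B`-symmetrically on `r`; hence for `x, y ∈ W` the operator
`ad ⁅x, y⁆` on `r` is both symmetric and antisymmetric, i.e. zero. The projection `π : L → W`
along `r` is a Lie morphism with `π(s) = W`, so `ad ∘ π` restricted to the perfect algebra `s`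
kills brackets and therefore vanishes: `⁅W, r⁆ = 0`. Then the projection onto `r` along `W` is a
Lie morphism as well, and it kills `s` because `s` is perfect and `r` solvable; thus `s ⊆ W`.
-/

open LieAlgebra

section

variable {R L L' : Type*} [CommRing R] [LieRing L] [LieAlgebra R L] [LieRing L'] [LieAlgebra R L']

lemma LieAlgebra.IsSemisimple.derivedSeries_one_eq_top [IsSemisimple R L] :
    derivedSeries R L 1 = ⊤ := by
  change ⁅(⊤ : LieIdeal R L), ⊤⁆ = ⊤
  refine eq_top_iff.mpr (IsSemisimple.sSup_atoms_eq_top.symm.le.trans (sSup_le fun I hI => ?_))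
  rw [← lie_eq_self_of_isAtom_of_nonabelian I hI (IsSemisimple.non_abelian_of_isAtom I hI)]
  exact LieSubmodule.mono_lie le_top le_top

lemma LieHom.apply_eq_zero_of_perfect_of_map_lie_eq_zero (hL : derivedSeries R L 1 = ⊤)
    (f : L →ₗ⁅R⁆ L') (hf : ∀ x y : L, f ⁅x, y⁆ = 0) (x : L) : f x = 0 := by
  have hker : derivedSeries R L 1 ≤ f.ker :=
    (LieSubmodule.lie_le_iff _ _ _).mpr fun a _ b _ => f.mem_ker.mpr (hf a b)
  exact f.mem_ker.mp (hker (hL.symm ▸ LieSubmodule.mem_top x))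

lemma LieHom.apply_eq_zero_of_perfect_of_mem_solvable (hL : derivedSeries R L 1 = ⊤)
    {I : LieIdeal R L'} [IsSolvable I] (f : L →ₗ⁅R⁆ L') (hf : ∀ x, f x ∈ I) (x : L) :
    f x = 0 := by
  have hmap : ∀ k, (derivedSeries R L k).map f ≤ derivedSeriesOfIdeal R L' k I := by
    intro k
    induction k with
    | zero => exact LieIdeal.map_le_iff_le_comap.mpr fun y _ => hf y
    | succ k ih =>
      rw [derivedSeries_def, derivedSeriesOfIdeal_succ, derivedSeriesOfIdeal_succ]
      exact (LieIdeal.map_bracket_le f).trans (LieSubmodule.mono_lie ih ih)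
  obtain ⟨k, hk⟩ := IsSolvable.solvable (R := R) (L := I)
  rw [LieIdeal.derivedSeries_eq_bot_iff] at hk
  have hx : f x ∈ (derivedSeries R L k).map f := by
    rw [LieIdeal.derivedSeries_eq_top k hL]
    exact LieIdeal.mem_map (LieSubmodule.mem_top x)
  simpa [hk] using hmap k hx

noncomputable def Submodule.projectionLieHom (J K : Submodule R L) (h : IsCompl J K)
    (hJ : ∀ x ∈ J, ∀ y ∈ J, ⁅x, y⁆ ∈ J) (hK : ∀ (x : L), ∀ y ∈ K, ⁅x, y⁆ ∈ K) : L →ₗ⁅R⁆ L where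
  __ := J.projection K h
  map_lie' {x y} := by
    set p := J.projection K h
    have hx : x - p x ∈ K := J.sub_projection_mem h x
    have hy : y - p y ∈ K := J.sub_projection_mem h y
    have hxy : ⁅x, y⁆ = ⁅p x, p y⁆ + (⁅p x, y - p y⁆ - ⁅y, x - p x⁆) := by
      rw [← lie_skew y (x - p x)]
      simp only [lie_sub, sub_lie]
      abel
    have hrest : ⁅p x, y - p y⁆ - ⁅y, x - p x⁆ ∈ K := K.sub_mem (hK _ _ hy) (hK _ _ hx)
    change p ⁅x, y⁆ = ⁅p x, p y⁆
    rw [hxy, map_add, (J.projection_apply_eq_zero_iff h).mpr hrest, add_zero,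
      J.projection_apply_of_mem_left h
        (hJ _ (J.projection_apply_mem h x) _ (J.projection_apply_mem h y))]

attribute [local instance] LieRing.ofAssociativeRing in
theorem LieIdeal.lie_eq_zero_of_isCompl_of_lie_lie_eq_zero {I : LieIdeal R L}
    {W : Submodule R L} (s : LieSubalgebra R L) (hs : derivedSeries R s 1 = ⊤)
    (hsI : s.toSubmodule ⊔ I.toSubmodule = ⊤) (hWI : IsCompl W I.toSubmodule)
    (hW : ∀ x ∈ W, ∀ y ∈ W, ⁅x, y⁆ ∈ W) (hWWI : ∀ x ∈ W, ∀ y ∈ W, ∀ u ∈ I, ⁅⁅x, y⁆, u⁆ = 0)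
    {w u : L} (hw : w ∈ W) (hu : u ∈ I) : ⁅w, u⁆ = 0 := by
  set π := W.projectionLieHom I.toSubmodule hWI hW fun _ _ => I.lie_mem
  have hπ : ∀ x, π x ∈ W := W.projection_apply_mem hWI
  have hsπ : ∀ x ∈ s, ∀ u ∈ I, ⁅π x, u⁆ = 0 := by
    intro x hx u hu
    let ψ : s →ₗ⁅R⁆ Module.End R I := (LieModule.toEnd R L I).comp (π.comp s.incl)
    have hψ := ψ.apply_eq_zero_of_perfect_of_map_lie_eq_zero hs ?_ ⟨x, hx⟩
    · exact congr_arg (fun φ : Module.End R I => (φ ⟨u, hu⟩ : L)) hψ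
    · intro a b
      ext ⟨v, hv⟩
      change ⁅π ⁅(a : L), b⁆, v⁆ = 0
      rw [LieHom.map_lie]
      exact hWWI _ (hπ a) _ (hπ b) v hv
  obtain ⟨x, hx, v, hv, rfl⟩ := Submodule.mem_sup.mp (hsI ▸ Submodule.mem_top : w ∈ _)
  have hπv : π v = 0 := (W.projection_apply_eq_zero_iff hWI).mpr hv
  have hπw : π (x + v) = x + v := W.projection_apply_of_mem_left hWI hw
  rw [← hπw, map_add, hπv, add_zero]
  exact hsπ x hx u hu

theorem LieSubalgebra.toSubmodule_le_of_isCompl {I : LieIdeal R L} [IsSolvable I]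
    {W : Submodule R L} (s : LieSubalgebra R L) (hs : derivedSeries R s 1 = ⊤)
    (hWI : IsCompl W I.toSubmodule) (hW : ∀ x ∈ W, ∀ y ∈ W, ⁅x, y⁆ ∈ W)
    (hWI₀ : ∀ w ∈ W, ∀ u ∈ I, ⁅w, u⁆ = 0) : s.toSubmodule ≤ W := by
  have hW_ideal : ∀ (x : L), ∀ w ∈ W, ⁅x, w⁆ ∈ W := by
    intro x w hw
    have hx : x - W.projection I.toSubmodule hWI x ∈ I := W.sub_projection_mem hWI x
    have : ⁅x, w⁆ = ⁅W.projection I.toSubmodule hWI x, w⁆ - ⁅w, x - W.projection _ hWI x⁆ := by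
      rw [← lie_skew w, sub_lie]
      abel
    rw [this, hWI₀ w hw _ hx, sub_zero]
    exact hW _ (W.projection_apply_mem hWI x) _ hw
  set σ := I.toSubmodule.projectionLieHom W hWI.symm (fun _ _ _ => I.lie_mem) hW_ideal
  intro x hx
  rw [← I.toSubmodule.projection_apply_eq_zero_iff hWI.symm]
  exact (σ.comp s.incl).apply_eq_zero_of_perfect_of_mem_solvable hs
    (fun y => I.toSubmodule.projection_apply_mem hWI.symm y) ⟨x, hx⟩

namespace LinearMap.BilinForm

def IsCyclic (B : LinearMap.BilinForm R L) : Prop :=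
  ∀ x y z : L, B ⁅x, y⁆ z + B ⁅y, z⁆ x + B ⁅z, x⁆ y = 0

variable {B : LinearMap.BilinForm R L} {I : LieIdeal R L}

namespace IsCyclic

lemma lie_mem_orthogonal (hB : B.IsCyclic) (hsymm : ∀ x y, B x y = B y x) {x y : L}
    (hx : x ∈ B.orthogonal I.toSubmodule) (hy : y ∈ B.orthogonal I.toSubmodule) :
    ⁅x, y⁆ ∈ B.orthogonal I.toSubmodule := by
  intro u hu
  have hyu : B ⁅y, u⁆ x = 0 := hx _ (I.lie_mem hu)
  have hux : B ⁅u, x⁆ y = 0 := hy _ (lie_mem_left R L I u x hu)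
  show B u ⁅x, y⁆ = 0
  linear_combination hsymm u ⁅x, y⁆ + hB x y u - hyu - hux

lemma apply_lie_comm (hB : B.IsCyclic) {w u v : L} (hw : w ∈ B.orthogonal I.toSubmodule)
    (hv : v ∈ I) : B ⁅w, u⁆ v = B ⁅w, v⁆ u := by
  have huv : B ⁅u, v⁆ w = 0 := hw _ (I.lie_mem hv)
  have hvw : B ⁅v, w⁆ u = - B ⁅w, v⁆ u := by rw [← lie_skew, map_neg, LinearMap.neg_apply]
  linear_combination hB w u v - huv - hvw

lemma lie_lie_eq_zero [NoZeroDivisors R] (hB : B.IsCyclic) (hsymm : ∀ x y, B x y = B y x)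
    (hI : ∀ x ∈ I, (∀ y ∈ I, B x y = 0) → x = 0) (h2 : (2 : R) ≠ 0) {x y u : L}
    (hx : x ∈ B.orthogonal I.toSubmodule) (hy : y ∈ B.orthogonal I.toSubmodule) (hu : u ∈ I) :
    ⁅⁅x, y⁆, u⁆ = 0 := by
  refine hI _ (I.lie_mem hu) fun v hv => ?_
  -- `ad ⁅x, y⁆` is `B`-symmetric on `I`, and `B`-antisymmetric as a commutator of symmetric maps
  have hsym : B ⁅⁅x, y⁆, u⁆ v = B ⁅⁅x, y⁆, v⁆ u :=
    hB.apply_lie_comm (hB.lie_mem_orthogonal hsymm hx hy) hv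
  have hswap : ∀ {a b : L}, a ∈ B.orthogonal I.toSubmodule → b ∈ B.orthogonal I.toSubmodule →
      B ⁅a, ⁅b, u⁆⁆ v = B ⁅b, ⁅a, v⁆⁆ u := fun ha hb => by
    rw [hB.apply_lie_comm ha hv, hsymm, hB.apply_lie_comm hb (I.lie_mem hv)]
  have hanti : B ⁅⁅x, y⁆, u⁆ v = - B ⁅⁅x, y⁆, v⁆ u := by
    rw [lie_lie, map_sub, LinearMap.sub_apply, hswap hx hy, hswap hy hx, lie_lie, map_sub,
      LinearMap.sub_apply]
    ring
  have : (2 : R) * B ⁅⁅x, y⁆, u⁆ v = 0 := by linear_combination hsym + hanti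
  exact (mul_eq_zero.mp this).resolve_left h2

end IsCyclic

end LinearMap.BilinForm

end

theorem cyclic_metric_nondegenerate_on_radical_splits_general
    {F L : Type*} [Field F] [LieRing L] [LieAlgebra F L] [FiniteDimensional F L]
    (hchar2 : ringChar F ≠ 2)
    (s : LieSubalgebra F L) [LieAlgebra.IsSemisimple F s]
    (hlevi : IsCompl s.toSubmodule (LieAlgebra.radical F L).toSubmodule)
    (B : L →ₗ[F] L →ₗ[F] F)
    (hsymm : ∀ x y : L, B x y = B y x)
    (hcyc : ∀ x y z : L, B ⁅x, y⁆ z + B ⁅y, z⁆ x + B ⁅z, x⁆ y = 0)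
    (hnondeg : ∀ x ∈ LieAlgebra.radical F L,
      (∀ y ∈ LieAlgebra.radical F L, B x y = 0) → x = 0) :
    (∀ x ∈ s, ∀ y ∈ LieAlgebra.radical F L, ⁅x, y⁆ = 0) ∧
    (∀ x ∈ s, ∀ y ∈ LieAlgebra.radical F L, B x y = 0) := by
  set I := LieAlgebra.radical F L
  set W := LinearMap.BilinForm.orthogonal B I.toSubmodule
  have hB : LinearMap.BilinForm.IsCyclic B := hcyc
  have hWI : IsCompl W I.toSubmodule :=
    ((LinearMap.BilinForm.isCompl_orthogonal_iff_disjoint fun x y h => (hsymm y x).trans h).mpr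
      (Submodule.disjoint_def.mpr fun x hx hxW =>
        hnondeg x hx fun y hy => (hsymm x y).trans (hxW y hy))).symm
  have hW : ∀ x ∈ W, ∀ y ∈ W, ⁅x, y⁆ ∈ W := fun _ hx _ hy => hB.lie_mem_orthogonal hsymm hx hy
  have hs : LieAlgebra.derivedSeries F s 1 = ⊤ := LieAlgebra.IsSemisimple.derivedSeries_one_eq_top
  have hWI₀ : ∀ w ∈ W, ∀ u ∈ I, ⁅w, u⁆ = 0 := fun _ hw _ hu =>
    LieIdeal.lie_eq_zero_of_isCompl_of_lie_lie_eq_zero s hs hlevi.sup_eq_top hWI hW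
      (fun _ hx _ hy _ hu => hB.lie_lie_eq_zero hsymm hnondeg (Ring.two_ne_zero hchar2) hx hy hu)
      hw hu
  have hsW : s.toSubmodule ≤ W := s.toSubmodule_le_of_isCompl hs hWI hW hWI₀
  exact ⟨fun x hx u hu => hWI₀ x (hsW hx) u hu,
    fun x hx u hu => (hsymm x u).trans (hsW hx u hu)⟩

/-- Let g = s + r be a Levi decomposition (s a semisimple Levi factor,
r = radical g) and B a cyclic metric whose restriction to r is non-degenerate.
Then [s, r] = 0 and B(s, r) = 0, so (g, B) is the orthogonal direct product of
(s, B|_s) and (r, B|_r). -/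
theorem cyclic_metric_nondegenerate_on_radical_splits
    {F L : Type*} [Field F] [LieRing L] [LieAlgebra F L] [FiniteDimensional F L]
    (hchar2 : ringChar F ≠ 2) (hchar3 : ringChar F ≠ 3)
    (s : LieSubalgebra F L) [LieAlgebra.IsSemisimple F s]
    (hlevi : IsCompl s.toSubmodule (LieAlgebra.radical F L).toSubmodule)
    (B : L →ₗ[F] L →ₗ[F] F)
    (hsymm : ∀ x y : L, B x y = B y x)
    (hcyc : ∀ x y z : L, B ⁅x, y⁆ z + B ⁅y, z⁆ x + B ⁅z, x⁆ y = 0)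
    (hnondeg : ∀ x ∈ LieAlgebra.radical F L,
      (∀ y ∈ LieAlgebra.radical F L, B x y = 0) → x = 0) :
    (∀ x ∈ s, ∀ y ∈ LieAlgebra.radical F L, ⁅x, y⁆ = 0) ∧
    (∀ x ∈ s, ∀ y ∈ LieAlgebra.radical F L, B x y = 0) :=
  cyclic_metric_nondegenerate_on_radical_splits_general hchar2 s hlevi B hsymm hcyc hnondeg
end

section
/- Let (g, B) be a cyclic metric Lie algebra with Levi decomposition g = s + r, and let C(nil g) denote the center of the nilradical of g. Then the subspace [s, C(nil g)] is isotropic with respect to B, i.e., B([s, C(nil g)], [s, C(nil g)]) = 0. -/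
/-!
For commuting `p, q`, cyclicity gives `B ⁅z, p⁆ q = B ⁅z, q⁆ p`. Applying this inside an abelian
ideal `I` (such as the center of the nilradical) together with the Jacobi identity and the symmetry
of `B` yields `2 B ⁅⁅a, b⁆, q⁆ p = 0` for `p, q ∈ I`, so `z ↦ B ⁅z, q⁆ p` vanishes on the derived
algebra `⁅L, L⁆`. A semisimple Levi factor is perfect, hence lies in `⁅L, L⁆`, and
`B ⁅x, u⁆ ⁅y, v⁆ = B ⁅y, ⁅x, u⁆⁆ v` with `⁅x, u⁆` again in the center of the nilradical.
-/

open LieAlgebra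

section

variable {R L : Type*} [CommRing R] [LieRing L] [LieAlgebra R L]

def IsCyclicForm (B : L →ₗ[R] L →ₗ[R] R) : Prop :=
  ∀ x y z : L, B ⁅x, y⁆ z + B ⁅y, z⁆ x + B ⁅z, x⁆ y = 0

namespace IsCyclicForm

variable {B : L →ₗ[R] L →ₗ[R] R}

theorem apply_lie_comm (hB : IsCyclicForm B) {p q : L} (hpq : ⁅p, q⁆ = 0) (z : L) :
    B ⁅z, p⁆ q = B ⁅z, q⁆ p := by
  have h := hB z p q
  rw [hpq, ← lie_skew q z] at h
  simp only [map_zero, LinearMap.zero_apply, map_neg, LinearMap.neg_apply] at h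
  linear_combination h

theorem apply_lie_lie_eq_zero [NoZeroDivisors R] (hB : IsCyclicForm B)
    (hsymm : ∀ x y : L, B x y = B y x) (h2 : (2 : R) ≠ 0) (I : LieIdeal R L) [IsLieAbelian I]
    {p q : L} (hp : p ∈ I) (hq : q ∈ I) (a b : L) :
    B ⁅⁅a, b⁆, q⁆ p = 0 := by
  have comm : ∀ {x y : L}, x ∈ I → y ∈ I → ⁅x, y⁆ = 0 := fun hx hy =>
    congrArg Subtype.val (trivial_lie_zero I I ⟨_, hx⟩ ⟨_, hy⟩)
  have expand : ∀ {x y : L}, x ∈ I → y ∈ I →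
      B ⁅a, x⁆ ⁅b, y⁆ = B ⁅⁅a, b⁆, y⁆ x + B ⁅b, x⁆ ⁅a, y⁆ := fun hx hy => by
    rw [hB.apply_lie_comm (comm hx (I.lie_mem hy)), hB.apply_lie_comm (comm hx (I.lie_mem hy)),
      leibniz_lie, map_add, LinearMap.add_apply]
  have e1 := expand hp hq
  have e2 := expand hq hp
  have e3 := hB.apply_lie_comm (comm hp hq) ⁅a, b⁆
  have h : 2 * B ⁅⁅a, b⁆, q⁆ p = 0 := by
    linear_combination -e1 - e2 - e3 - hsymm ⁅b, p⁆ ⁅a, q⁆ - hsymm ⁅b, q⁆ ⁅a, p⁆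
  exact (mul_eq_zero.mp h).resolve_left h2

theorem apply_lie_eq_zero_of_mem_derived [NoZeroDivisors R] (hB : IsCyclicForm B)
    (hsymm : ∀ x y : L, B x y = B y x) (h2 : (2 : R) ≠ 0) (I : LieIdeal R L) [IsLieAbelian I]
    {p q : L} (hp : p ∈ I) (hq : q ∈ I) {z : L}
    (hz : z ∈ ⁅(⊤ : LieIdeal R L), (⊤ : LieIdeal R L)⁆) :
    B ⁅z, q⁆ p = 0 := by
  rw [← LieSubmodule.mem_toSubmodule, LieSubmodule.lieIdeal_oper_eq_linear_span'] at hz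
  induction hz using Submodule.span_induction with
  | mem _ h =>
    obtain ⟨a, -, b, -, rfl⟩ := h
    exact hB.apply_lie_lie_eq_zero hsymm h2 I hp hq a b
  | zero => simp
  | add _ _ _ _ hx hy => rw [add_lie, map_add, LinearMap.add_apply, hx, hy, add_zero]
  | smul t _ _ hx => rw [smul_lie, map_smul, LinearMap.smul_apply, hx, smul_zero]

end IsCyclicForm

theorem LieAlgebra.IsSemisimple.lie_top_eq_top [IsSemisimple R L] :
    ⁅(⊤ : LieIdeal R L), (⊤ : LieIdeal R L)⁆ = ⊤ := by
  refine le_antisymm le_top ?_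
  conv_lhs => rw [← sSup_atoms_eq_top (R := R) (L := L)]
  refine sSup_le fun I hI => ?_
  rw [← lie_eq_self_of_isAtom_of_nonabelian I hI (non_abelian_of_isAtom I hI)]
  exact LieSubmodule.mono_lie le_top le_top

theorem LieSubalgebra.mem_lie_top_of_isSemisimple (s : LieSubalgebra R L) [IsSemisimple R s]
    {x : L} (hx : x ∈ s) : x ∈ ⁅(⊤ : LieIdeal R L), (⊤ : LieIdeal R L)⁆ := by
  have hx' : (⟨x, hx⟩ : s) ∈ ⁅(⊤ : LieIdeal R s), (⊤ : LieIdeal R s)⁆ := by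
    rw [IsSemisimple.lie_top_eq_top]; trivial
  exact LieSubmodule.mono_lie le_top le_top (LieIdeal.map_bracket_le s.incl (LieIdeal.mem_map hx'))

/-- The paper's `C(n)`; unlike `LieAlgebra.center R n`, it is an ideal of `L`, not of `n`. -/
def LieIdeal.center (n : LieIdeal R L) : LieIdeal R L where
  carrier := {u | u ∈ n ∧ ∀ w ∈ n, ⁅u, w⁆ = 0}
  add_mem' := fun ⟨hu, hu'⟩ ⟨hv, hv'⟩ =>
    ⟨n.add_mem hu hv, fun w hw => by rw [add_lie, hu' w hw, hv' w hw, add_zero]⟩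
  zero_mem' := ⟨n.zero_mem, fun w _ => zero_lie w⟩
  smul_mem' := fun t _ ⟨hu, hu'⟩ =>
    ⟨n.smul_mem t hu, fun w hw => by rw [smul_lie, hu' w hw, smul_zero]⟩
  lie_mem := fun {x u} ⟨hu, hu'⟩ =>
    ⟨n.lie_mem hu, fun w hw => by
      rw [lie_lie, hu' w hw, hu' _ (n.lie_mem hw), lie_zero, sub_zero]⟩

instance LieIdeal.isLieAbelian_center (n : LieIdeal R L) : IsLieAbelian n.center :=
  ⟨fun ⟨_, hu⟩ ⟨_, hv⟩ => Subtype.ext (hu.2 _ hv.1)⟩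

end

theorem bracket_semisimple_center_nilradical_isotropic_general
    {F L : Type*} [Field F] [LieRing L] [LieAlgebra F L]
    (hchar2 : ringChar F ≠ 2)
    (s : LieSubalgebra F L) [LieAlgebra.IsSemisimple F s]
    (n : LieIdeal F L)
    (B : L →ₗ[F] L →ₗ[F] F)
    (hsymm : ∀ x y : L, B x y = B y x)
    (hcyc : ∀ x y z : L, B ⁅x, y⁆ z + B ⁅y, z⁆ x + B ⁅z, x⁆ y = 0) :
    ∀ x ∈ s, ∀ y ∈ s,
      ∀ u, u ∈ n → (∀ w ∈ n, ⁅u, w⁆ = 0) →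
      ∀ v, v ∈ n → (∀ w ∈ n, ⁅v, w⁆ = 0) →
        B ⁅x, u⁆ ⁅y, v⁆ = 0 := by
  intro x hx y hy u hu huc v hv hvc
  have hB : IsCyclicForm B := hcyc
  have hxu : ⁅x, u⁆ ∈ n.center := n.center.lie_mem ⟨hu, huc⟩
  calc B ⁅x, u⁆ ⁅y, v⁆ = B ⁅y, v⁆ ⁅x, u⁆ := hsymm _ _
    _ = B ⁅y, ⁅x, u⁆⁆ v := hB.apply_lie_comm (hvc _ hxu.1) y
    _ = 0 := hB.apply_lie_eq_zero_of_mem_derived hsymm (Ring.two_ne_zero hchar2) n.center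
      ⟨hv, hvc⟩ hxu (s.mem_lie_top_of_isSemisimple hy)

/-- Let (g, B) be a cyclic metric Lie algebra with Levi decomposition
g = s + r (s a semisimple Levi factor, r = radical g), and let n be the nilradical
(the largest nilpotent ideal) of g.  Then the subspace [s, C(n)] is isotropic:
B([s, C(n)], [s, C(n)]) = 0, where C(n) is the center of n. -/
theorem bracket_semisimple_center_nilradical_isotropic
    {F L : Type*} [Field F] [LieRing L] [LieAlgebra F L] [FiniteDimensional F L]
    (hchar2 : ringChar F ≠ 2) (hchar3 : ringChar F ≠ 3)
    (s : LieSubalgebra F L) [LieAlgebra.IsSemisimple F s]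
    (hlevi : IsCompl s.toSubmodule (LieAlgebra.radical F L).toSubmodule)
    (n : LieIdeal F L) [LieRing.IsNilpotent n]
    (hmax : ∀ I : LieIdeal F L, LieRing.IsNilpotent I → I ≤ n)
    (B : L →ₗ[F] L →ₗ[F] F)
    (hsymm : ∀ x y : L, B x y = B y x)
    (hcyc : ∀ x y z : L, B ⁅x, y⁆ z + B ⁅y, z⁆ x + B ⁅z, x⁆ y = 0) :
    ∀ x ∈ s, ∀ y ∈ s,
      ∀ u, u ∈ n → (∀ w ∈ n, ⁅u, w⁆ = 0) →
      ∀ v, v ∈ n → (∀ w ∈ n, ⁅v, w⁆ = 0) →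
        B ⁅x, u⁆ ⁅y, v⁆ = 0 :=
  bracket_semisimple_center_nilradical_isotropic_general hchar2 s n B hsymm hcyc
end
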